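/- Let T be a rigid object in the skeletally small category C and let L_S : C → C_S be the localisation of C at the class S. If U is an object of C(T) and V is any object of C, then the map Hom_C(U, V) → Hom_{C_S}(U, V) induced by L_S is surjective. -/

import Mathlib

/-!
Common setup: `C` is a Hom-finite, Krull-Schmidt (= idempotent complete, given
Hom-finiteness over a field), `k`-linear triangulated category with suspension
functor `Σ = shiftFunctor C (1 : ℤ)`, and `T` is a rigid object of `C`.
-/

noncomputable section

open CategoryTheory CategoryTheory.Limits CategoryTheory.Pretriangulated

universe v u

namespace PaperBM

variable {C : Type u} [Category.{v} C] [Preadditive C] [HasZeroObject C]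
  [HasShift C ℤ] [∀ n : ℤ, (shiftFunctor C n).Additive] [Pretriangulated C]
  [HasFiniteBiproducts C]

/-- `X` lies in `add T`: it is a direct summand of a finite direct sum of copies of `T`. -/
def memAdd (T X : C) : Prop :=
  ∃ (n : ℕ) (s : X ⟶ ⨁ (fun _ : Fin n => T)) (r : (⨁ fun _ : Fin n => T) ⟶ X), s ≫ r = 𝟙 X

/-- `T` is rigid: `Hom_C(T, ΣT) = 0`. -/
def IsRigidObj (T : C) : Prop := ∀ f : T ⟶ (shiftFunctor C (1 : ℤ)).obj T, f = 0

/-- `Y ∈ T^⊥`, i.e. `Hom_C(X, ΣY) = 0` for all `X ∈ add T`. -/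
def memTperp (T Y : C) : Prop :=
  ∀ (X : C), memAdd T X → ∀ f : X ⟶ (shiftFunctor C (1 : ℤ)).obj Y, f = 0

/-- `Y ∈ ⊥T`, i.e. `Hom_C(Y, ΣX) = 0` for all `X ∈ add T`. -/
def memPerpT (T Y : C) : Prop :=
  ∀ (X : C), memAdd T X → ∀ f : Y ⟶ (shiftFunctor C (1 : ℤ)).obj X, f = 0

/-- `Y ∈ ΣT^⊥`, the image of `T^⊥` under the suspension `Σ`. -/
def memSigmaTperp (T Y : C) : Prop :=
  ∃ Z : C, memTperp T Z ∧ Nonempty (Y ≅ (shiftFunctor C (1 : ℤ)).obj Z)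

/-- The map `f` factors through an object belonging to the class `P` of objects. -/
def FactorsThru (P : C → Prop) {A B : C} (f : A ⟶ B) : Prop :=
  ∃ (Z : C) (g : A ⟶ Z) (h : Z ⟶ B), P Z ∧ g ≫ h = f

/-- The class `S̃` of maps `f : X ⟶ Y` such that in a completion
`Σ⁻¹Z →h X →f Y →g Z` of `f` to a triangle (where `A` plays the role of `Σ⁻¹Z`,
so that `Z = ΣA`), both `g` and `h` factor through an object of `ΣT^⊥`. -/
def Stilde (T : C) : MorphismProperty C := fun X Y f =>
  ∃ (A : C) (h : A ⟶ X) (g : Y ⟶ (shiftFunctor C (1 : ℤ)).obj A),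
    (Triangle.mk h f g ∈ distTriang C) ∧
    FactorsThru (memSigmaTperp T) g ∧ FactorsThru (memSigmaTperp T) h

/-- The class `S` of maps `f : X ⟶ Y` such that in a completion
`Σ⁻¹Z →h X →f Y →g Z` of `f` to a triangle (where `A` plays the role of `Σ⁻¹Z`,
so that `Z = ΣA`), `g` factors through an object of `ΣT^⊥` and `Σ⁻¹Z ∈ ΣT^⊥`. -/
def Sclass (T : C) : MorphismProperty C := fun X Y f =>
  ∃ (A : C) (h : A ⟶ X) (g : Y ⟶ (shiftFunctor C (1 : ℤ)).obj A),
    (Triangle.mk h f g ∈ distTriang C) ∧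
    FactorsThru (memSigmaTperp T) g ∧ memSigmaTperp T A

/-- `X ∈ C(T)`: there is a triangle `T₁ → T₀ → X → ΣT₁` with `T₀, T₁ ∈ add T`. -/
def memCT (T X : C) : Prop :=
  ∃ (T₁ T₀ : C) (a : T₁ ⟶ T₀) (b : T₀ ⟶ X) (c : X ⟶ (shiftFunctor C (1 : ℤ)).obj T₁),
    memAdd T T₁ ∧ memAdd T T₀ ∧ (Triangle.mk a b c ∈ distTriang C)

/-- `f : X₀ ⟶ Y` is a right `P`-approximation of `Y`. -/
def IsRightApprox (P : C → Prop) {X₀ Y : C} (f : X₀ ⟶ Y) : Prop :=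
  P X₀ ∧ ∀ (W : C), P W → ∀ g : W ⟶ Y, ∃ g' : W ⟶ X₀, g' ≫ f = g

/-- `f : Y ⟶ X₀` is a left `P`-approximation of `Y`. -/
def IsLeftApprox (P : C → Prop) {Y X₀ : C} (f : Y ⟶ X₀) : Prop :=
  P X₀ ∧ ∀ (W : C), P W → ∀ g : Y ⟶ W, ∃ g' : X₀ ⟶ W, f ≫ g' = g

/-- The map `f : X₀ ⟶ Y` is right minimal. -/
def IsRightMinimal {X₀ Y : C} (f : X₀ ⟶ Y) : Prop :=
  ∀ g : X₀ ⟶ X₀, g ≫ f = f → IsIso g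

/-- The functor `H = Hom_C(T, -) : C ⥤ Mod End_C(T)ᵒᵖ`.  Here, with Mathlib's
conventions, the endomorphism ring `End (Opposite.op T)` of `T` viewed in `Cᵒᵖ` plays
the role of `End_C(T)ᵒᵖ`, so that each `Hom_C(T, X)` is a left module over it. -/
abbrev homFunctor (T : C) : C ⥤ ModuleCat.{v} (End (Opposite.op T)) :=
  preadditiveCoyonedaObj T ⋙ ModuleCat.restrictScalars.{v}
    ({ toFun := fun r => MulOpposite.op r.unop
       map_one' := rfl
       map_mul' := fun _ _ => rfl
       map_zero' := rfl
       map_add' := fun _ _ => rfl } : End (Opposite.op T) →+* (End T)ᵐᵒᵖ)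

/-- The predicate on `End_C(T)ᵒᵖ`-modules of being finite-dimensional (equivalently,
since `End_C(T)` is a finite-dimensional algebra, finitely generated). -/
abbrev isFinDim (T : C) : ModuleCat.{v} (End (Opposite.op T)) → Prop :=
  fun M => Module.Finite (End (Opposite.op T)) M

/-- The category `mod End_C(T)ᵒᵖ` of finite-dimensional `End_C(T)ᵒᵖ`-modules. -/
abbrev fdMod (T : C) := ObjectProperty.FullSubcategory (isFinDim T)

/-- The ideal relation on `C(T)` of maps factoring through an object of `ΣT^⊥`. -/
def homRelCT (T : C) : HomRel (ObjectProperty.FullSubcategory (memCT T)) :=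
  fun A B f g => FactorsThru (memSigmaTperp T) (((f - g).hom : A.obj ⟶ B.obj))

/-- The ideal relation on `C(T)` of maps factoring through an object of `add ΣT`. -/
def homRelCTadd (T : C) : HomRel (ObjectProperty.FullSubcategory (memCT T)) :=
  fun A B f g => FactorsThru (memAdd ((shiftFunctor C (1 : ℤ)).obj T)) (((f - g).hom : A.obj ⟶ B.obj))

/-- The ideal relation on `C` of maps factoring through an object of `add ΣT`. -/
def homRelAdd (T : C) : HomRel C :=
  fun A B f g => FactorsThru (memAdd ((shiftFunctor C (1 : ℤ)).obj T)) (f - g)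

end PaperBM

namespace CategoryTheory.MorphismProperty

/-- The morphisms `φ` of the localisation such that `Q g ≫ φ` comes from `C` for every `g`
out of `U` form a class stable under composition that contains the image of `Q` and, thanks
to the lifting hypothesis, the formal inverses of the maps in `W`; so it is everything. -/
theorem Q_map_surjective_of_exists_lift {C : Type u} [Category.{v} C] (W : MorphismProperty C)
    {U : C} (hU : ∀ ⦃X Y : C⦄ (s : X ⟶ Y), W s → ∀ g : U ⟶ Y, ∃ f : U ⟶ X, f ≫ s = g)
    (V : C) : Function.Surjective (fun f : U ⟶ V => W.Q.map f) := by
  let P : MorphismProperty W.Localization := fun A B φ =>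
    ∀ g : U ⟶ A.as.obj, ∃ f : U ⟶ B.as.obj, W.Q.map f = W.Q.map g ≫ φ
  have : P.IsStableUnderComposition := ⟨fun φ ψ hφ hψ g => by
    obtain ⟨f, hf⟩ := hφ g
    obtain ⟨f', hf'⟩ := hψ f
    exact ⟨f', hf'.trans ((hf =≫ ψ).trans (Category.assoc _ _ _))⟩⟩
  have hP : P = ⊤ := by
    refine Localization.Construction.morphismProperty_eq_top P
      (fun _ _ φ g => ⟨g ≫ φ, W.Q.map_comp g φ⟩) (fun _ _ s hs g => ?_)
    obtain ⟨f, rfl⟩ := hU s hs g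
    refine ⟨f, (?_ : W.Q.map f = W.Q.map (f ≫ s) ≫ Localization.Construction.wInv s hs)⟩
    rw [Functor.map_comp, Category.assoc]
    exact ((W.Q.map f ≫= (Localization.Construction.wIso s hs).hom_inv_id).trans
      (Category.comp_id _)).symm
  intro φ
  obtain ⟨f, hf⟩ := (hP ▸ trivial : P φ) (𝟙 U)
  exact ⟨f, hf.trans ((congrArg (· ≫ φ) (W.Q.map_id U)).trans (Category.id_comp φ))⟩

end CategoryTheory.MorphismProperty

namespace PaperBM

variable {C : Type u} [Category.{v} C] [Preadditive C] [HasShift C ℤ] [HasFiniteBiproducts C]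

lemma memSigmaTperp.eq_zero_of_memAdd {T X Y : C} (hY : memSigmaTperp T Y)
    (hX : memAdd T X) (f : X ⟶ Y) : f = 0 := by
  obtain ⟨Z, hZ, ⟨e⟩⟩ := hY
  rw [← Category.comp_id f, ← e.hom_inv_id, ← Category.assoc, hZ X hX (f ≫ e.hom), zero_comp]

lemma memSigmaTperp.shift_eq_zero_of_memAdd {T X A : C} (hA : memSigmaTperp T A)
    (hX : memAdd T X) (f : X⟦(1 : ℤ)⟧ ⟶ A⟦(1 : ℤ)⟧) : f = 0 := by
  obtain ⟨x, rfl⟩ := (shiftFunctor C (1 : ℤ)).map_surjective f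
  rw [hA.eq_zero_of_memAdd hX x, Functor.map_zero]

variable [HasZeroObject C] [∀ n : ℤ, (shiftFunctor C n).Additive] [Pretriangulated C]

/-- A map from `U ∈ C(T)` into `ΣT^⊥` factors through `U → ΣT₁`, and `Hom(ΣT₁, Σ(ΣT^⊥)) = 0`. -/
lemma memCT.comp_eq_zero {T U Y A : C} (hU : memCT T U) (hY : memSigmaTperp T Y)
    (hA : memSigmaTperp T A) (u : U ⟶ Y) (w : Y ⟶ A⟦(1 : ℤ)⟧) : u ≫ w = 0 := by
  obtain ⟨T₁, T₀, _, b, c, hT₁, hT₀, hTri⟩ := hU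
  obtain ⟨v, hv⟩ := Triangle.yoneda_exact₃ _ hTri u (hY.eq_zero_of_memAdd hT₀ _)
  calc u ≫ w = c ≫ v ≫ w := (hv =≫ w).trans (Category.assoc _ _ _)
    _ = 0 := by rw [hA.shift_eq_zero_of_memAdd hT₁ (v ≫ w), comp_zero]

lemma exists_lift_of_memCT_of_Sclass {T U X Y : C} (hU : memCT T U) {s : X ⟶ Y}
    (hs : Sclass T s) (g : U ⟶ Y) : ∃ f : U ⟶ X, f ≫ s = g := by
  obtain ⟨A, _, _, hTri, ⟨Z, g₁, g₂, hZ, rfl⟩, hA⟩ := hs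
  obtain ⟨f, hf⟩ := Triangle.coyoneda_exact₃ _ hTri g
    ((Category.assoc g g₁ g₂).symm.trans (hU.comp_eq_zero hZ hA _ _))
  exact ⟨f, hf.symm⟩

end PaperBM

open PaperBM

/-- If `U ∈ C(T)` and `V` is any object of `C`, then the map
`Hom_C(U, V) → Hom_{C_S}(U, V)` induced by the localisation functor `L_S` is
surjective. -/
theorem statement_13 {C : Type u} [Category.{v} C] [Preadditive C] [HasZeroObject C]
    [HasShift C ℤ] [∀ n : ℤ, (shiftFunctor C n).Additive] [Pretriangulated C]
    [HasFiniteBiproducts C]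
    {k : Type*} [Field k] [CategoryTheory.Linear k C]
    [∀ X Y : C, FiniteDimensional k (X ⟶ Y)] [IsIdempotentComplete C]
    [EssentiallySmall.{v} C] (T : C) (hT : IsRigidObj T)
    {U : C} (hU : memCT T U) (V : C) :
    Function.Surjective (fun f : U ⟶ V => (Sclass T).Q.map f) :=
  (Sclass T).Q_map_surjective_of_exists_lift
    (fun _ _ _ hs g => exists_lift_of_memCT_of_Sclass hU hs g) V
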